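/- Let f be convex differentiable with quadratic upper bound constant L₁ and minimizer x*. Assume ‖y − x*‖ < R for all y with f(y) ≤ f(x₀). Then the iterates of Random Pursuit with absolute line search accuracy μ satisfy, for all N ≥ 0: E[f(x_N) − f(x*)] ≤ Q/(N+1) + N L₁ μ²/2, where Q = max{2 n L₁ R², f(x₀) − f(x*)}. -/

import Mathlib

/-!
The exact line search along `u` gains at least `⟪∇f x, u⟫² / (2 L₁)` by the quadratic upper
bound, and since the directional derivative vanishes at the exact minimiser, an error `μ` in the
step costs at most `L₁ μ² / 2`. For `u` uniform on the sphere and independent of `x`, rotation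
invariance gives `E ⟪∇f x, u⟫² = E ‖∇f x‖² / n`. Convexity bounds
`min (f x - f x*) (f x₀ - f x*)` by `‖∇f x‖ R`; the minimum is needed because inexact steps may
leave the initial sublevel set. With Jensen's inequality this yields
`a (k + 1) ≤ a k - (M k)² / (2 n L₁ R²)` for `M k = E[min (f x_k - f x*) (f x₀ - f x*)]` and
`a k = E[f x_k - f x*] - k L₁ μ² / 2 ≤ M k`, and induction on this recursion gives
`a k ≤ Q / (k + 1)`.
-/

open MeasureTheory ProbabilityTheory
open scoped RealInnerProductSpace

section Smooth

variable {E : Type*} [NormedAddCommGroup E] [InnerProductSpace ℝ E] {f : E → ℝ} {f' : E → E}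
  {L : ℝ}

lemma hasDerivAt_comp_add_smul [CompleteSpace E] (hdiff : ∀ x, HasGradientAt f (f' x) x)
    (x u : E) (t : ℝ) :
    HasDerivAt (fun s : ℝ => f (x + s • u)) ⟪f' (x + t • u), u⟫ t := by
  have hline : HasDerivAt (fun s : ℝ => x + s • u) u t := by
    simpa using ((hasDerivAt_id t).smul_const u).const_add x
  simpa [InnerProductSpace.toDual_apply_apply, Function.comp_def] using
    (hdiff (x + t • u)).hasFDerivAt.comp_hasDerivAt t hline

lemma measurable_of_hasGradientAt [CompleteSpace E] [MeasurableSpace E] [BorelSpace E]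
    [SecondCountableTopology E] (hdiff : ∀ x, HasGradientAt f (f' x) x) : Measurable f' := by
  rw [← gradient_eq hdiff]
  exact (InnerProductSpace.toDual ℝ E).symm.continuous.measurable.comp (measurable_fderiv ℝ f)

lemma le_add_mul_inner_add_sq (hquad : ∀ x y, f y - f x - ⟪f' x, y - x⟫ ≤ L / 2 * ‖y - x‖ ^ 2)
    (x v : E) (s : ℝ) :
    f (x + s • v) ≤ f x + s * ⟪f' x, v⟫ + L / 2 * s ^ 2 * ‖v‖ ^ 2 := by
  have h := hquad x (x + s • v)
  rw [add_sub_cancel_left, inner_smul_right, norm_smul, mul_pow, Real.norm_eq_abs, sq_abs] at h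
  linarith

lemma le_sub_sq_inner_div (hL : 0 < L)
    (hquad : ∀ x y, f y - f x - ⟪f' x, y - x⟫ ≤ L / 2 * ‖y - x‖ ^ 2) (x u : E) (hu : ‖u‖ = 1) :
    f (x + (-⟪f' x, u⟫ / L) • u) ≤ f x - ⟪f' x, u⟫ ^ 2 / (2 * L) := by
  convert le_add_mul_inner_add_sq hquad x u (-⟪f' x, u⟫ / L) using 1
  rw [hu]
  field_simp
  ring

lemma norm_sq_le_two_mul_sub_min (hL : 0 < L)
    (hquad : ∀ x y, f y - f x - ⟪f' x, y - x⟫ ≤ L / 2 * ‖y - x‖ ^ 2) {xstar : E}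
    (hmin : ∀ y, f xstar ≤ f y) (z : E) :
    ‖f' z‖ ^ 2 ≤ 2 * L * (f z - f xstar) := by
  have h := le_add_mul_inner_add_sq hquad z (f' z) (-1 / L)
  rw [real_inner_self_eq_norm_sq] at h
  have hgain : -1 / L * ‖f' z‖ ^ 2 + L / 2 * (-1 / L) ^ 2 * ‖f' z‖ ^ 2
      = -(‖f' z‖ ^ 2 / (2 * L)) := by
    field_simp
    ring
  have : ‖f' z‖ ^ 2 / (2 * L) ≤ f z - f xstar := by linarith [hmin (z + (-1 / L) • f' z)]
  rwa [div_le_iff₀ (by positivity), mul_comm] at this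

lemma add_sq_inner_div_le_of_lineSearch [CompleteSpace E] (hL : 0 < L)
    (hdiff : ∀ x, HasGradientAt f (f' x) x)
    (hquad : ∀ x y, f y - f x - ⟪f' x, y - x⟫ ≤ L / 2 * ‖y - x‖ ^ 2)
    {x u : E} (hu : ‖u‖ = 1) {hstar htilde μ : ℝ}
    (hls : ∀ t : ℝ, f (x + hstar • u) ≤ f (x + t • u)) (happ : |htilde - hstar| ≤ μ) :
    f (x + htilde • u) + ⟪f' x, u⟫ ^ 2 / (2 * L) ≤ f x + L * μ ^ 2 / 2 := by
  have hcrit : ⟪f' (x + hstar • u), u⟫ = 0 :=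
    IsLocalMin.hasDerivAt_eq_zero (.of_forall hls) (hasDerivAt_comp_add_smul hdiff x u hstar)
  have hnear : f (x + htilde • u) ≤ f (x + hstar • u) + L * μ ^ 2 / 2 := by
    have h := le_add_mul_inner_add_sq hquad (x + hstar • u) u (htilde - hstar)
    rw [hcrit, hu, add_assoc, ← add_smul, add_sub_cancel] at h
    have : (htilde - hstar) ^ 2 ≤ μ ^ 2 := sq_le_sq' (abs_le.mp happ).1 (abs_le.mp happ).2
    nlinarith
  linarith [hls (-⟪f' x, u⟫ / L), le_sub_sq_inner_div hL hquad x u hu]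

lemma apply_add_smul_sub_le_of_firstOrder (hconv : ∀ x y, f x + ⟪f' x, y - x⟫ ≤ f y)
    (a b : E) {t : ℝ} (ht₀ : 0 ≤ t) (ht₁ : t ≤ 1) :
    f (a + t • (b - a)) ≤ (1 - t) * f a + t * f b := by
  set z := a + t • (b - a)
  have ha := hconv z a
  have hb := hconv z b
  rw [show a - z = -t • (b - a) by simp [z], inner_smul_right] at ha
  rw [show b - z = (1 - t) • (b - a) by simp only [z, sub_smul, one_smul]; abel,
    inner_smul_right] at hb
  nlinarith [mul_le_mul_of_nonneg_left ha (sub_nonneg.mpr ht₁), mul_le_mul_of_nonneg_left hb ht₀]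

lemma min_sub_le_norm_mul (hf : Continuous f) (hconv : ∀ x y, f x + ⟪f' x, y - x⟫ ≤ f y)
    {xstar x₀ : E} (hmin : ∀ y, f xstar ≤ f y) {R : ℝ} (hR : ∀ y, f y ≤ f x₀ → ‖y - xstar‖ < R)
    (z : E) :
    min (f z - f xstar) (f x₀ - f xstar) ≤ ‖f' z‖ * R := by
  have hsub : f z - f xstar ≤ ‖f' z‖ * ‖z - xstar‖ := by
    have h := hconv z xstar
    rw [← neg_sub, inner_neg_right] at h
    linarith [real_inner_le_norm (f' z) (z - xstar)]
  by_cases hz : f z ≤ f x₀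
  · exact (min_le_left _ _).trans
      (hsub.trans (mul_le_mul_of_nonneg_left (hR z hz).le (norm_nonneg _)))
  -- Otherwise the level `f x₀` is crossed at some `xstar + t • (z - xstar)`, which lies in the
  -- ball of radius `R`; convexity along the segment transfers the bound from there to `z`.
  obtain ⟨t, ⟨ht₀, ht₁⟩, hft⟩ := intermediate_value_Icc zero_le_one
    (f := fun t : ℝ => f (xstar + t • (z - xstar))) (by fun_prop)
    (by simpa using ⟨hmin x₀, (not_le.mp hz).le⟩)
  have htR : t * ‖z - xstar‖ < R := by
    have h := hR _ hft.le
    rwa [add_sub_cancel_left, norm_smul, Real.norm_eq_abs, abs_of_nonneg ht₀] at h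
  have hchord := apply_add_smul_sub_le_of_firstOrder hconv xstar z ht₀ ht₁
  simp only at hft
  calc min (f z - f xstar) (f x₀ - f xstar) ≤ f x₀ - f xstar := min_le_right _ _
    _ ≤ t * (f z - f xstar) := by rw [← hft]; linarith
    _ ≤ t * (‖f' z‖ * ‖z - xstar‖) := mul_le_mul_of_nonneg_left hsub ht₀
    _ = ‖f' z‖ * (t * ‖z - xstar‖) := by ring
    _ ≤ ‖f' z‖ * R := mul_le_mul_of_nonneg_left htR.le (norm_nonneg _)

end Smooth

section Isotropic

variable {E : Type*} [NormedAddCommGroup E] [InnerProductSpace ℝ E]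

lemma MeasureTheory.Integrable.inner_sq_of_ae_norm_eq_one {α : Type*} [MeasurableSpace α]
    {μ : Measure α} {G U : α → E} (hG : Integrable (fun a => ‖G a‖ ^ 2) μ)
    (hGm : AEStronglyMeasurable G μ) (hUm : AEStronglyMeasurable U μ)
    (hU : ∀ᵐ a ∂μ, ‖U a‖ = 1) :
    Integrable (fun a => ⟪G a, U a⟫ ^ 2) μ := by
  refine hG.mono' ((hGm.inner hUm).pow 2) ?_
  filter_upwards [hU] with a ha
  rw [Real.norm_eq_abs, abs_pow, ← mul_one ‖G a‖, ← ha]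
  exact pow_le_pow_left₀ (abs_nonneg _) (abs_real_inner_le_norm _ _) 2

variable [MeasurableSpace E] [BorelSpace E] {ν : Measure E}

lemma integral_inner_sq_eq_of_norm_eq (hinv : ∀ e : E ≃ₗᵢ[ℝ] E, ν.map e = ν) {v w : E}
    (h : ‖v‖ = ‖w‖) :
    ∫ u, ⟪w, u⟫ ^ 2 ∂ν = ∫ u, ⟪v, u⟫ ^ 2 ∂ν := by
  set e := (ℝ ∙ (v - w))ᗮ.reflection
  calc ∫ u, ⟪w, u⟫ ^ 2 ∂ν = ∫ u, ⟪e v, u⟫ ^ 2 ∂ν := by rw [Submodule.reflection_sub h]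
    _ = ∫ u, ⟪e v, e u⟫ ^ 2 ∂ν := by
      conv_lhs => rw [← hinv e]
      exact integral_map_equiv e.toMeasurableEquiv _
    _ = ∫ u, ⟪v, u⟫ ^ 2 ∂ν := by simp_rw [LinearIsometryEquiv.inner_map_map]

variable [FiniteDimensional ℝ E] [IsProbabilityMeasure ν]

lemma finrank_mul_integral_inner_sq (hsphere : ∀ᵐ u ∂ν, ‖u‖ = 1)
    (hinv : ∀ e : E ≃ₗᵢ[ℝ] E, ν.map e = ν) (v : E) :
    Module.finrank ℝ E * ∫ u, ⟪v, u⟫ ^ 2 ∂ν = ‖v‖ ^ 2 := by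
  let b := stdOrthonormalBasis ℝ E
  have hbasis : ∀ i, ∫ u, ⟪v, u⟫ ^ 2 ∂ν = ‖v‖ ^ 2 * ∫ u, ⟪b i, u⟫ ^ 2 ∂ν := fun i => by
    rw [← integral_inner_sq_eq_of_norm_eq hinv (w := ‖v‖ • b i) (by simp [norm_smul]),
      ← integral_const_mul]
    simp_rw [inner_smul_left, mul_pow]
    simp
  have hparseval : ∑ i, ∫ u, ⟪b i, u⟫ ^ 2 ∂ν = 1 := by
    rw [← integral_finsetSum _ fun i _ =>
        (integrable_const (‖b i‖ ^ 2)).inner_sq_of_ae_norm_eq_one (G := fun _ => b i)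
          (U := fun u => u) aestronglyMeasurable_const aestronglyMeasurable_id hsphere,
      ← probReal_univ (μ := ν), ← integral_indicator_one MeasurableSet.univ]
    refine integral_congr_ae ?_
    filter_upwards [hsphere] with u hu
    simpa [hu, sq_abs] using b.sum_sq_norm_inner_right u
  calc (Module.finrank ℝ E : ℝ) * ∫ u, ⟪v, u⟫ ^ 2 ∂ν
      = ∑ _i : Fin (Module.finrank ℝ E), ∫ u, ⟪v, u⟫ ^ 2 ∂ν := by simp
    _ = ‖v‖ ^ 2 := by
      rw [Finset.sum_congr rfl fun i _ => hbasis i, ← Finset.mul_sum, hparseval, mul_one]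

lemma integral_inner_sq_eq_norm_sq_div_finrank (hsphere : ∀ᵐ u ∂ν, ‖u‖ = 1)
    (hinv : ∀ e : E ≃ₗᵢ[ℝ] E, ν.map e = ν) (v : E) :
    ∫ u, ⟪v, u⟫ ^ 2 ∂ν = ‖v‖ ^ 2 / Module.finrank ℝ E := by
  have hn : (Module.finrank ℝ E : ℝ) ≠ 0 := by
    obtain ⟨w, hw⟩ := hsphere.exists
    intro h
    simpa [h, hw] using finrank_mul_integral_inner_sq hsphere hinv w
  rw [eq_div_iff hn, mul_comm, finrank_mul_integral_inner_sq hsphere hinv]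

lemma integral_inner_sq_of_indepFun (hsphere : ∀ᵐ u ∂ν, ‖u‖ = 1)
    (hinv : ∀ e : E ≃ₗᵢ[ℝ] E, ν.map e = ν) {Ω : Type*} [MeasurableSpace Ω] {P : Measure Ω}
    [IsProbabilityMeasure P] {G U : Ω → E} (hG : Measurable G) (hU : Measurable U)
    (hGU : IndepFun G U P) (hlaw : P.map U = ν) (hG2 : Integrable (fun ω => ‖G ω‖ ^ 2) P) :
    ∫ ω, ⟪G ω, U ω⟫ ^ 2 ∂P = (∫ ω, ‖G ω‖ ^ 2 ∂P) / Module.finrank ℝ E := by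
  have hpair : P.map (fun ω => (G ω, U ω)) = (P.map G).prod ν := by
    rw [← hlaw]
    exact (indepFun_iff_map_prod_eq_prod_map_map hG.aemeasurable hU.aemeasurable).mp hGU
  have hint : Integrable (fun p : E × E => ⟪p.1, p.2⟫ ^ 2) ((P.map G).prod ν) :=
    (((integrable_map_measure (g := fun g : E => ‖g‖ ^ 2) (by fun_prop)
      hG.aemeasurable).mpr hG2).comp_fst ν).inner_sq_of_ae_norm_eq_one (by fun_prop)
        (by fun_prop) (Measure.quasiMeasurePreserving_snd.ae hsphere)
  calc ∫ ω, ⟪G ω, U ω⟫ ^ 2 ∂P = ∫ p, ⟪p.1, p.2⟫ ^ 2 ∂(P.map fun ω => (G ω, U ω)) :=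
        (integral_map (φ := fun ω => (G ω, U ω)) (by fun_prop)
          (f := fun p : E × E => ⟪p.1, p.2⟫ ^ 2) (by fun_prop)).symm
    _ = ∫ g, ∫ u, ⟪g, u⟫ ^ 2 ∂ν ∂(P.map G) := by rw [hpair, integral_prod _ hint]
    _ = ∫ g, ‖g‖ ^ 2 / Module.finrank ℝ E ∂(P.map G) := by
        simp_rw [integral_inner_sq_eq_norm_sq_div_finrank hsphere hinv]
    _ = (∫ ω, ‖G ω‖ ^ 2 ∂P) / Module.finrank ℝ E := by
        rw [integral_map hG.aemeasurable (by fun_prop), integral_div]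

end Isotropic

section Expectation

variable {Ω : Type*} [MeasurableSpace Ω] {P : Measure Ω}

lemma sq_integral_le_integral_sq [IsProbabilityMeasure P] {X : Ω → ℝ} (hX : MemLp X 2 P) :
    (∫ ω, X ω ∂P) ^ 2 ≤ ∫ ω, X ω ^ 2 ∂P :=
  sub_nonneg.mp ((variance_eq_sub hX).symm ▸ variance_nonneg X P)

lemma integral_sub_le_integral_min [IsProbabilityMeasure P] {F : Ω → ℝ} (hF : Integrable F P)
    {b t : ℝ} (ht : 0 ≤ t) (hFb : ∀ᵐ ω ∂P, F ω ≤ b + t) :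
    ∫ ω, F ω ∂P - t ≤ ∫ ω, min (F ω) b ∂P := by
  calc ∫ ω, F ω ∂P - t = ∫ ω, (F ω - t) ∂P := by simp [integral_sub hF (integrable_const t)]
    _ ≤ ∫ ω, min (F ω) b ∂P := by
      refine integral_mono_ae (hF.sub (integrable_const t)) (hF.inf (integrable_const b)) ?_
      filter_upwards [hFb] with ω h
      exact le_min (by linarith) (by linarith)

lemma ae_le_add_mul_of_ae_le_add {F : ℕ → Ω → ℝ} {b c : ℝ} (h0 : ∀ᵐ ω ∂P, F 0 ω ≤ b)
    (hstep : ∀ k, ∀ᵐ ω ∂P, F (k + 1) ω ≤ F k ω + c) (k : ℕ) : ∀ᵐ ω ∂P, F k ω ≤ b + k * c := by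
  induction k with
  | zero => simpa using h0
  | succ k ih =>
    filter_upwards [ih, hstep k] with ω h h'
    push_cast
    linarith

end Expectation

lemma sub_sq_div_le_div_add_two {Q a t : ℝ} (hQ : 0 < Q) (ha : 0 ≤ a) (ht : 0 ≤ t)
    (h : a ≤ Q / (t + 1)) : a - a ^ 2 / Q ≤ Q / (t + 2) := by
  rw [le_div_iff₀ (by positivity)] at h
  have hQa : 0 ≤ Q - a := by nlinarith
  rw [le_div_iff₀ (by positivity),
    show (a - a ^ 2 / Q) * (t + 2) = Q - ((Q - a * (t + 1)) * (Q - a) + a ^ 2) / Q by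
      field_simp; ring]
  exact sub_le_self _ (by positivity)

lemma le_div_succ_of_le_sub_sq_div {Q' Q : ℝ} (hQ' : 0 < Q') (hQ : Q' ≤ Q) {a M : ℕ → ℝ}
    (h0 : a 0 ≤ Q) (haM : ∀ k, a k ≤ M k) (hstep : ∀ k, a (k + 1) ≤ a k - M k ^ 2 / Q')
    (N : ℕ) : a N ≤ Q / (N + 1) := by
  have hQ0 : 0 < Q := hQ'.trans_le hQ
  induction N with
  | zero => simpa using h0
  | succ k ih =>
    rw [Nat.cast_succ, add_assoc, one_add_one_eq_two]
    rcases le_or_gt (a k) 0 with hneg | hpos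
    · have : 0 ≤ M k ^ 2 / Q' := by positivity
      have : 0 ≤ Q / (k + 2) := by positivity
      linarith [hstep k]
    · have hsq : a k ^ 2 / Q ≤ M k ^ 2 / Q' := by
        gcongr
        exact haM k
      linarith [hstep k, sub_sq_div_le_div_add_two hQ0 hpos.le k.cast_nonneg ih]

section RandomStep

variable {E : Type*} [NormedAddCommGroup E] [InnerProductSpace ℝ E] [MeasurableSpace E]
  [BorelSpace E] {f : E → ℝ} {f' : E → E} {L : ℝ}
  {Ω : Type*} [MeasurableSpace Ω] {P : Measure Ω} [IsProbabilityMeasure P]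

lemma sq_integral_min_le_mul_integral_norm_sq (hf : Continuous f)
    (hconv : ∀ x y, f x + ⟪f' x, y - x⟫ ≤ f y) {xstar x₀ : E} (hmin : ∀ y, f xstar ≤ f y)
    {R : ℝ} (hR : ∀ y, f y ≤ f x₀ → ‖y - xstar‖ < R) {X : Ω → E} (hX : Measurable X)
    (hG2 : Integrable (fun ω => ‖f' (X ω)‖ ^ 2) P) :
    (∫ ω, min (f (X ω) - f xstar) (f x₀ - f xstar) ∂P) ^ 2 ≤ R ^ 2 * ∫ ω, ‖f' (X ω)‖ ^ 2 ∂P := by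
  have hm0 : ∀ ω, 0 ≤ min (f (X ω) - f xstar) (f x₀ - f xstar) := fun ω =>
    le_min (sub_nonneg.2 (hmin _)) (sub_nonneg.2 (hmin _))
  have hm : MemLp (fun ω => min (f (X ω) - f xstar) (f x₀ - f xstar)) 2 P := by
    refine .of_bound
      (((hf.measurable.comp hX).sub_const _).min measurable_const).aestronglyMeasurable
      (f x₀ - f xstar) (.of_forall fun ω => ?_)
    rw [Real.norm_eq_abs, abs_of_nonneg (hm0 ω)]
    exact min_le_right _ _
  refine (sq_integral_le_integral_sq hm).trans ?_
  rw [← integral_const_mul]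
  refine integral_mono_ae hm.integrable_sq (hG2.const_mul _) (.of_forall fun ω => ?_)
  nlinarith [min_sub_le_norm_mul hf hconv hmin hR (X ω), hm0 ω]

lemma integral_le_of_ae_descent_step [FiniteDimensional ℝ E] (hL : 0 < L)
    (hdiff : ∀ x, HasGradientAt f (f' x) x) (hconv : ∀ x y, f x + ⟪f' x, y - x⟫ ≤ f y)
    (hquad : ∀ x y, f y - f x - ⟪f' x, y - x⟫ ≤ L / 2 * ‖y - x‖ ^ 2)
    {xstar x₀ : E} (hmin : ∀ y, f xstar ≤ f y) {R : ℝ} (hR : ∀ y, f y ≤ f x₀ → ‖y - xstar‖ < R)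
    {ν : Measure E} [IsProbabilityMeasure ν] (hsphere : ∀ᵐ u ∂ν, ‖u‖ = 1)
    (hinv : ∀ e : E ≃ₗᵢ[ℝ] E, ν.map e = ν)
    {X U X' : Ω → E} (hX : Measurable X) (hU : Measurable U) (hXU : IndepFun X U P)
    (hlaw : P.map U = ν) (hF : Integrable (fun ω => f (X ω) - f xstar) P)
    (hF' : Integrable (fun ω => f (X' ω) - f xstar) P) {c : ℝ}
    (hstep : ∀ᵐ ω ∂P, f (X' ω) + ⟪f' (X ω), U ω⟫ ^ 2 / (2 * L) ≤ f (X ω) + c) :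
    ∫ ω, (f (X' ω) - f xstar) ∂P ≤ ∫ ω, (f (X ω) - f xstar) ∂P + c -
      (∫ ω, min (f (X ω) - f xstar) (f x₀ - f xstar) ∂P) ^ 2
        / (2 * Module.finrank ℝ E * L * R ^ 2) := by
  set n : ℝ := (Module.finrank ℝ E : ℝ)
  have hR0 : 0 < R := (norm_nonneg _).trans_lt (hR xstar (hmin x₀))
  have hf' : Measurable f' := measurable_of_hasGradientAt hdiff
  have hG : Measurable fun ω => f' (X ω) := hf'.comp hX
  have hG2 : Integrable (fun ω => ‖f' (X ω)‖ ^ 2) P :=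
    (hF.const_mul (2 * L)).mono' (hG.norm.pow_const 2).aestronglyMeasurable
      (.of_forall fun ω => by simpa using norm_sq_le_two_mul_sub_min hL hquad hmin (X ω))
  have hU1 : ∀ᵐ ω ∂P, ‖U ω‖ = 1 := ae_of_ae_map hU.aemeasurable (hlaw ▸ hsphere)
  have hint := hG2.inner_sq_of_ae_norm_eq_one hG.aestronglyMeasurable
    hU.aestronglyMeasurable hU1
  have hexpect : ∫ ω, (f (X' ω) - f xstar) ∂P + (∫ ω, ⟪f' (X ω), U ω⟫ ^ 2 ∂P) / (2 * L)
      ≤ ∫ ω, (f (X ω) - f xstar) ∂P + c := by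
    rw [← integral_div, ← integral_add hF' (hint.div_const _)]
    calc _ ≤ ∫ ω, (f (X ω) - f xstar + c) ∂P := by
          refine integral_mono_ae (hF'.add (hint.div_const _)) (hF.add (integrable_const c)) ?_
          filter_upwards [hstep] with ω h
          linarith
      _ = _ := by simp [integral_add hF (integrable_const c)]
  have hprogress : (∫ ω, min (f (X ω) - f xstar) (f x₀ - f xstar) ∂P) ^ 2 / (2 * n * L * R ^ 2)
      ≤ (∫ ω, ⟪f' (X ω), U ω⟫ ^ 2 ∂P) / (2 * L) := by
    calc _ ≤ R ^ 2 * (∫ ω, ‖f' (X ω)‖ ^ 2 ∂P) / (2 * n * L * R ^ 2) := by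
          gcongr
          exact sq_integral_min_le_mul_integral_norm_sq
            (continuous_iff_continuousAt.mpr fun y => (hdiff y).continuousAt) hconv hmin hR hX hG2
      _ = (∫ ω, ⟪f' (X ω), U ω⟫ ^ 2 ∂P) / (2 * L) := by
        rw [integral_inner_sq_of_indepFun hsphere hinv hG hU
            (hXU.comp hf' measurable_id) hlaw hG2, div_div,
          show 2 * n * L * R ^ 2 = R ^ 2 * (n * (2 * L)) by ring,
          mul_div_mul_left _ _ (by positivity)]
  linarith

end RandomStep

theorem rp_convergence_convex_general (n : ℕ) (hn : 0 < n)
    (f : EuclideanSpace ℝ (Fin n) → ℝ)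
    (f' : EuclideanSpace ℝ (Fin n) → EuclideanSpace ℝ (Fin n)) (L₁ : ℝ) (hL : 0 < L₁)
    (hdiff : ∀ x, HasGradientAt f (f' x) x)
    (hconv : ∀ x y, f x + ⟪f' x, y - x⟫ ≤ f y)
    (hquad : ∀ x y, f y - f x - ⟪f' x, y - x⟫ ≤ L₁ / 2 * ‖y - x‖ ^ 2)
    (xstar : EuclideanSpace ℝ (Fin n)) (hmin : ∀ y, f xstar ≤ f y)
    (μs : Measure (EuclideanSpace ℝ (Fin n))) [IsProbabilityMeasure μs]
    (hsphere : ∀ᵐ u ∂μs, ‖u‖ = 1)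
    (hinv : ∀ e : EuclideanSpace ℝ (Fin n) ≃ₗᵢ[ℝ] EuclideanSpace ℝ (Fin n), μs.map e = μs)
    (Ω : Type*) [MeasurableSpace Ω] (P : Measure Ω) [IsProbabilityMeasure P]
    (x u : ℕ → Ω → EuclideanSpace ℝ (Fin n)) (hstar htilde : ℕ → Ω → ℝ)
    (μ : ℝ)
    (x₀ : EuclideanSpace ℝ (Fin n)) (hx0 : ∀ ω, x 0 ω = x₀)
    (R : ℝ) (hR : ∀ y, f y ≤ f x₀ → ‖y - xstar‖ < R)
    (hxsucc : ∀ k ω, x (k + 1) ω = x k ω + htilde k ω • u k ω)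
    (hls : ∀ k ω, ∀ t : ℝ, f (x k ω + hstar k ω • u k ω) ≤ f (x k ω + t • u k ω))
    (happ : ∀ k ω, |htilde k ω - hstar k ω| ≤ μ)
    (hmeasx : ∀ k, Measurable (x k)) (hmeasu : ∀ k, Measurable (u k))
    (hlaw : ∀ k, P.map (u k) = μs)
    (hindep : ∀ k, IndepFun (x k) (u k) P)
    (N : ℕ) :
    ∫ ω, (f (x N ω) - f xstar) ∂P ≤
      max (2 * n * L₁ * R ^ 2) (f x₀ - f xstar) / (N + 1) + N * L₁ * μ ^ 2 / 2 := by
  set c := L₁ * μ ^ 2 / 2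
  set δ₀ := f x₀ - f xstar
  have hf : Continuous f := continuous_iff_continuousAt.mpr fun y => (hdiff y).continuousAt
  have hQ' : 0 < 2 * n * L₁ * R ^ 2 := by
    have := (norm_nonneg _).trans_lt (hR xstar (hmin x₀))
    positivity
  have hstep : ∀ k, ∀ᵐ ω ∂P,
      f (x (k + 1) ω) + ⟪f' (x k ω), u k ω⟫ ^ 2 / (2 * L₁) ≤ f (x k ω) + c := fun k => by
    filter_upwards [ae_of_ae_map (hmeasu k).aemeasurable (hlaw k ▸ hsphere)] with ω hω
    rw [hxsucc]
    exact add_sq_inner_div_le_of_lineSearch hL hdiff hquad hω (hls k ω) (happ k ω)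
  have hbound : ∀ k, ∀ᵐ ω ∂P, f (x k ω) - f xstar ≤ δ₀ + k * c :=
    ae_le_add_mul_of_ae_le_add (.of_forall fun ω => by simp [hx0, δ₀]) fun k => by
      filter_upwards [hstep k] with ω h
      linarith [div_nonneg (sq_nonneg ⟪f' (x k ω), u k ω⟫) (by positivity : (0 : ℝ) ≤ 2 * L₁)]
  have hint : ∀ k, Integrable (fun ω => f (x k ω) - f xstar) P := fun k =>
    .of_mem_Icc 0 (δ₀ + k * c) ((hf.measurable.comp (hmeasx k)).sub_const _).aemeasurable (by
      filter_upwards [hbound k] with ω h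
      exact ⟨sub_nonneg.2 (hmin _), h⟩)
  have hstart : ∫ ω, (f (x 0 ω) - f xstar) ∂P = δ₀ := by simp [hx0, δ₀]
  have hdecrease : ∀ k, ∫ ω, (f (x (k + 1) ω) - f xstar) ∂P ≤ ∫ ω, (f (x k ω) - f xstar) ∂P + c
      - (∫ ω, min (f (x k ω) - f xstar) δ₀ ∂P) ^ 2 / (2 * n * L₁ * R ^ 2) := fun k => by
    simpa using integral_le_of_ae_descent_step hL hdiff hconv hquad hmin hR hsphere hinv
      (hmeasx k) (hmeasu k) (hindep k) (hlaw k) (hint k) (hint (k + 1)) (hstep k)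
  have hrate := le_div_succ_of_le_sub_sq_div hQ' (le_max_left _ δ₀)
    (a := fun k => ∫ ω, (f (x k ω) - f xstar) ∂P - k * c)
    (M := fun k => ∫ ω, min (f (x k ω) - f xstar) δ₀ ∂P)
    (by simp [hstart])
    (fun k => integral_sub_le_integral_min (hint k) (by positivity) (hbound k))
    (fun k => by push_cast; linarith [hdecrease k]) N
  linarith [show (N : ℝ) * c = N * L₁ * μ ^ 2 / 2 by ring]

/-- O(1/k) convergence of Random Pursuit on general smooth convex functions:
E[f(x_N) − f(x*)] ≤ Q/(N+1) + N L₁ μ²/2 with Q = max{2nL₁R², f(x₀) − f(x*)}. -/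
theorem rp_convergence_convex (n : ℕ) (hn : 0 < n)
    (f : EuclideanSpace ℝ (Fin n) → ℝ)
    (f' : EuclideanSpace ℝ (Fin n) → EuclideanSpace ℝ (Fin n)) (L₁ : ℝ) (hL : 0 < L₁)
    (hdiff : ∀ x, HasGradientAt f (f' x) x)
    (hconv : ∀ x y, f x + ⟪f' x, y - x⟫ ≤ f y)
    (hquad : ∀ x y, f y - f x - ⟪f' x, y - x⟫ ≤ L₁ / 2 * ‖y - x‖ ^ 2)
    (xstar : EuclideanSpace ℝ (Fin n)) (hmin : ∀ y, f xstar ≤ f y)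
    (μs : Measure (EuclideanSpace ℝ (Fin n))) [IsProbabilityMeasure μs]
    (hsphere : ∀ᵐ u ∂μs, ‖u‖ = 1)
    (hinv : ∀ e : EuclideanSpace ℝ (Fin n) ≃ₗᵢ[ℝ] EuclideanSpace ℝ (Fin n), μs.map e = μs)
    (Ω : Type*) [MeasurableSpace Ω] (P : Measure Ω) [IsProbabilityMeasure P]
    (x u : ℕ → Ω → EuclideanSpace ℝ (Fin n)) (hstar htilde : ℕ → Ω → ℝ)
    (μ : ℝ) (hμ : 0 ≤ μ)
    (x₀ : EuclideanSpace ℝ (Fin n)) (hx0 : ∀ ω, x 0 ω = x₀)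
    (R : ℝ) (hR : ∀ y, f y ≤ f x₀ → ‖y - xstar‖ < R)
    (hxsucc : ∀ k ω, x (k + 1) ω = x k ω + htilde k ω • u k ω)
    (hls : ∀ k ω, ∀ t : ℝ, f (x k ω + hstar k ω • u k ω) ≤ f (x k ω + t • u k ω))
    (happ : ∀ k ω, |htilde k ω - hstar k ω| ≤ μ)
    (hmeasx : ∀ k, Measurable (x k)) (hmeasu : ∀ k, Measurable (u k))
    (hlaw : ∀ k, P.map (u k) = μs)
    (hindep : ∀ k, IndepFun (x k) (u k) P)
    (N : ℕ) :
    ∫ ω, (f (x N ω) - f xstar) ∂P ≤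
      max (2 * n * L₁ * R ^ 2) (f x₀ - f xstar) / (N + 1) + N * L₁ * μ ^ 2 / 2 :=
  rp_convergence_convex_general n hn f f' L₁ hL hdiff hconv hquad xstar hmin μs hsphere hinv Ω P x u
    hstar htilde μ x₀ hx0 R hR hxsucc hls happ hmeasx hmeasu hlaw hindep N
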